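/- arXiv:2006.14816 — 2 statements merged into one kernel-verified Lean document; each statement's English description precedes it below -/
import Mathlib

section
/- In Case A, if P(γ = ∞) > 0, E(|L′|·1_{γ<∞}) < ∞, and ∫_{ℝ₊} |H(s)| dG(s) < ∞, then M has integrable total variation: E(Var(M)_∞) < ∞. -/
/-! Since `P(γ = ∞) > 0`, the tail `Ḡ ≥ P(γ = ∞)` is bounded away from zero and `t_G = ∞`, so
Condition M gives `F(t) = (F(0) Ḡ(0) - ∫_{(0,t]} H dG) / Ḡ(t)` for all `t`: a product of two
functions of bounded variation on `ℝ₊`, because `∫ |H| dG < ∞`. A path of `M` follows `F` up to `γ`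
and then jumps once to `H(γ) + L'`, so its total variation is at most
`2 (Var(F) + |H(γ) + L'| 1_{γ<∞})`, which is integrable. -/

open MeasureTheory Filter Set Topology
open scoped ENNReal NNReal Classical

noncomputable section

namespace SingleJump

variable {Ω : Type*}

/-- The event `{γ > t}`. -/
def jumpSet (γ : Ω → ℝ≥0∞) (t : ℝ≥0) : Set Ω := {ω | (t : ℝ≥0∞) < γ ω}

/-- The collection `𝒻_t` of the single jump filtration generated by `γ` and the σ-field `m`:
`A ∈ 𝒻_t` iff `A` is `m`-measurable and `A ∩ {γ > t}` is either `∅` or `{γ > t}`. -/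
def jumpColl (m : MeasurableSpace Ω) (γ : Ω → ℝ≥0∞) (t : ℝ≥0) : Set (Set Ω) :=
  {A | MeasurableSet[m] A ∧ (A ∩ jumpSet γ t = ∅ ∨ A ∩ jumpSet γ t = jumpSet γ t)}

/-- `𝒻_t` as a σ-field (the collection `jumpColl` generates itself, see Proposition 1(i)). -/
def jumpσ (m : MeasurableSpace Ω) (γ : Ω → ℝ≥0∞) (t : ℝ≥0) : MeasurableSpace Ω :=
  MeasurableSpace.generateFrom (jumpColl m γ t)

/-- `𝒻_∞ = σ(⋃_{t ∈ ℝ₊} 𝒻_t)`. -/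
def jumpσInf (m : MeasurableSpace Ω) (γ : Ω → ℝ≥0∞) : MeasurableSpace Ω :=
  ⨆ t : ℝ≥0, jumpσ m γ t

/-- A real function on `ℝ≥0` is càdlàg: right-continuous everywhere, finite left limits. -/
def Cadlag (f : ℝ≥0 → ℝ) : Prop :=
  (∀ t, ContinuousWithinAt f (Ici t) t) ∧
    ∀ t : ℝ≥0, 0 < t → ∃ c : ℝ, Tendsto f (𝓝[<] t) (𝓝 c)

/-- The filter of times `t ∈ ℝ≥0` with `t ↑ a` strictly from the left (this is `atTop`
when `a = ∞`). -/
def leftF (a : ℝ≥0∞) : Filter ℝ≥0 := Filter.comap (fun t : ℝ≥0 => (t : ℝ≥0∞)) (𝓝[<] a)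

/-- Total variation of `f` over `[0,∞)`, including `|f 0|` (the paper's convention `Var`). -/
def totalVar (f : ℝ≥0 → ℝ) : ℝ≥0∞ := (‖f 0‖₊ : ℝ≥0∞) + eVariationOn f Set.univ

/-- The process `M` stopped at the (possibly infinite) random time `T`. -/
def stopped (M : ℝ≥0 → Ω → ℝ) (T : Ω → ℝ≥0∞) : ℝ≥0 → Ω → ℝ :=
  fun t ω => M (((t : ℝ≥0∞) ⊓ T ω).toNNReal) ω

section WithMeasurableSpace

variable [m : MeasurableSpace Ω]

/-- `Ḡ(t) = 1 - G(t) = P(γ > t)`. -/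
def Gbar (μ : Measure Ω) (γ : Ω → ℝ≥0∞) (t : ℝ≥0) : ℝ :=
  (μ {ω | (t : ℝ≥0∞) < γ ω}).toReal

/-- `Ḡ(t-) = P(γ ≥ t)`, the left-hand limit of `Ḡ` at `t`. -/
def GbarLeft (μ : Measure Ω) (γ : Ω → ℝ≥0∞) (t : ℝ≥0) : ℝ :=
  (μ {ω | (t : ℝ≥0∞) ≤ γ ω}).toReal

/-- `t_G = sup {t ∈ ℝ₊ : G(t) < 1}`, the right endpoint of the law of `γ`. -/
def tG (μ : Measure Ω) (γ : Ω → ℝ≥0∞) : ℝ≥0∞ :=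
  sSup ((fun t : ℝ≥0 => (t : ℝ≥0∞)) '' {t : ℝ≥0 | μ {ω | γ ω ≤ (t : ℝ≥0∞)} < 1})

/-- `𝒯 = {t ∈ ℝ₊ : P(γ ≥ t) > 0}`. -/
def TT (μ : Measure Ω) (γ : Ω → ℝ≥0∞) : Set ℝ≥0 :=
  {t | 0 < μ {ω | (t : ℝ≥0∞) ≤ γ ω}}

/-- Case A: `P(γ = t_G < ∞) = 0`. -/
def CaseA (μ : Measure Ω) (γ : Ω → ℝ≥0∞) : Prop :=
  μ {ω | γ ω = tG μ γ ∧ tG μ γ < ⊤} = 0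

/-- Case B: `P(γ = t_G < ∞) > 0`. -/
def CaseB (μ : Measure Ω) (γ : Ω → ℝ≥0∞) : Prop :=
  0 < μ {ω | γ ω = tG μ γ ∧ tG μ γ < ⊤}

/-- `z ∈ L¹_loc(dG)` : `z` is Borel and `∫_{[0,t]} |z(s)| dG(s) < ∞` for every `t ∈ 𝒯`,
where `dG` is the law of `γ` (a measure on `[0,∞]`). -/
def MemL1loc (μ : Measure Ω) (γ : Ω → ℝ≥0∞) (z : ℝ≥0 → ℝ) : Prop :=
  Measurable z ∧ ∀ t ∈ TT μ γ,
    IntegrableOn (fun x : ℝ≥0∞ => z x.toNNReal) (Icc 0 (t : ℝ≥0∞)) (μ.map γ)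

/-- `F loc≪ G` with density `z = dF/dG` : `F(t) = F(0) + ∫_(0,t] z(s) dG(s)` for `t < t_G`. -/
def LocAC (μ : Measure Ω) (γ : Ω → ℝ≥0∞) (F z : ℝ≥0 → ℝ) : Prop :=
  MemL1loc μ γ z ∧ ∀ t : ℝ≥0, (t : ℝ≥0∞) < tG μ γ →
    F t = F 0 + ∫ x in Ioc (0 : ℝ≥0∞) (t : ℝ≥0∞), z x.toNNReal ∂(μ.map γ)

/-- Condition M for the pair `(F, H)`. -/
def CondM (μ : Measure Ω) (γ : Ω → ℝ≥0∞) (F H : ℝ≥0 → ℝ) : Prop :=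
  (∃ z, LocAC μ γ F z) ∧ MemL1loc μ γ H ∧
  (∀ t : ℝ≥0, (t : ℝ≥0∞) < tG μ γ →
    F t * Gbar μ γ t + ∫ x in Ioc (0 : ℝ≥0∞) (t : ℝ≥0∞), H x.toNNReal ∂(μ.map γ)
      = F 0 * Gbar μ γ 0) ∧
  (CaseB μ γ → Tendsto F (leftF (tG μ γ)) (𝓝 (H (tG μ γ).toNNReal)))

/-- A stopping time of the single jump filtration: `{T ≤ t} ∈ 𝒻_t` for all `t ∈ ℝ₊`. -/
def IsSJStoppingTime (γ : Ω → ℝ≥0∞) (T : Ω → ℝ≥0∞) : Prop :=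
  ∀ t : ℝ≥0, {ω | T ω ≤ (t : ℝ≥0∞)} ∈ jumpColl m γ t

/-- The martingale property on a set `S` of times, w.r.t. the single jump filtration. -/
def MartingaleOn (μ : Measure Ω) (γ : Ω → ℝ≥0∞) (M : ℝ≥0 → Ω → ℝ) (S : Set ℝ≥0) : Prop :=
  (∀ t ∈ S, Measurable[jumpσ m γ t] (M t)) ∧ (∀ t ∈ S, Integrable (M t) μ) ∧
    ∀ s ∈ S, ∀ t ∈ S, s ≤ t → μ[M t|jumpσ m γ s] =ᵐ[μ] M s

/-- A uniformly integrable martingale w.r.t. the single jump filtration. -/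
def UIMartingale (μ : Measure Ω) (γ : Ω → ℝ≥0∞) (M : ℝ≥0 → Ω → ℝ) : Prop :=
  MartingaleOn μ γ M Set.univ ∧ UniformIntegrable M 1 μ

/-- A local martingale w.r.t. the single jump filtration: adapted, a.s. càdlàg paths, and
there are stopping times `T n ↑ ∞` a.s. with each stopped process a UI martingale. -/
def LocalMartingale (μ : Measure Ω) (γ : Ω → ℝ≥0∞) (M : ℝ≥0 → Ω → ℝ) : Prop :=
  (∀ t : ℝ≥0, Measurable[jumpσ m γ t] (M t)) ∧
  (∀ᵐ ω ∂μ, Cadlag fun t => M t ω) ∧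
  ∃ T : ℕ → Ω → ℝ≥0∞,
    (∀ n, IsSJStoppingTime γ (T n)) ∧
    (∀ᵐ ω ∂μ, Monotone (fun n => T n ω) ∧ Tendsto (fun n => T n ω) atTop (𝓝 (⊤ : ℝ≥0∞))) ∧
    ∀ n, UIMartingale μ γ (stopped M (T n))

/-- `E[L' | γ] = 0` for a (possibly only locally integrable) random variable `L'`. -/
def CondZeroGivenGamma (μ : Measure Ω) (γ : Ω → ℝ≥0∞) (L' : Ω → ℝ) : Prop :=
  ∀ B : Set ℝ≥0∞, MeasurableSet B → IntegrableOn L' (γ ⁻¹' B) μ →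
    ∫ ω in γ ⁻¹' B, L' ω ∂μ = 0

end WithMeasurableSpace

end SingleJump

section Variation

variable {α E E' : Type*} [LinearOrder α] [PseudoEMetricSpace E] [PseudoEMetricSpace E']

theorem eVariationOn_le_of_edist_le {f : α → E} {g : α → E'} {s : Set α}
    (h : ∀ x ∈ s, ∀ y ∈ s, x ≤ y → edist (f x) (f y) ≤ edist (g x) (g y)) :
    eVariationOn f s ≤ eVariationOn g s := by
  refine iSup_le fun ⟨n, u, hu, us⟩ => le_trans (Finset.sum_le_sum fun i _ => ?_)
    (eVariationOn.sum_le (f := g) hu us)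
  rw [edist_comm, edist_comm (g _)]
  exact h _ (us i) _ (us (i + 1)) (hu i.le_succ)

theorem BoundedVariationOn.const_sub {f : α → ℝ} {s : Set α} (hf : BoundedVariationOn f s)
    (c : ℝ) : BoundedVariationOn (fun t => c - f t) s :=
  ne_top_of_le_ne_top hf <| eVariationOn_le_of_edist_le fun x _ y _ _ => by
    rw [edist_dist, edist_dist, dist_sub_left]

theorem eVariationOn_ite_lt_le (f : α → E) (c : α) (x : E) {D : ℝ≥0∞}
    (hD : ∀ t, edist x (f t) ≤ D) :
    eVariationOn (fun t => if t < c then f t else x) univ ≤ eVariationOn f univ + D := by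
  set P := fun t => if t < c then f t else x
  refine iSup_le fun ⟨n, u, hu, _⟩ => ?_
  -- Along a partition, `P` follows `f` until the partition crosses `c`; the crossing step
  -- costs at most `D`, and afterwards `P` is constant.
  have crossing : ∀ n, ∑ i ∈ Finset.range n, edist (P (u (i + 1))) (P (u i)) ≤
      ∑ i ∈ Finset.range n, edist (f (u (i + 1))) (f (u i)) + if u n < c then 0 else D := by
    intro n
    induction n with
    | zero => simp
    | succ n ih =>
      rw [Finset.sum_range_succ, Finset.sum_range_succ]
      by_cases hn1 : u (n + 1) < c
      · have hn : u n < c := (hu n.le_succ).trans_lt hn1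
        simp only [P, hn, hn1, if_true, add_zero] at ih ⊢
        gcongr
      · by_cases hn : u n < c
        · simp only [P, hn, hn1, if_true, if_false, add_zero] at ih ⊢
          exact add_le_add (ih.trans le_self_add) (hD _)
        · simp only [P, hn, hn1, if_false, edist_self, add_zero] at ih ⊢
          exact ih.trans (by gcongr; exact le_self_add)
  refine (crossing n).trans (add_le_add (eVariationOn.sum_le hu fun _ => mem_univ _) ?_)
  split_ifs <;> simp

end Variation

theorem boundedVariationOn_setIntegral_of_monotone {α β : Type*} [LinearOrder α]
    [MeasurableSpace β] {ν : Measure β} {h : β → ℝ} {S : α → Set β} {U : Set β}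
    (hS : Monotone S) (hSm : ∀ t, MeasurableSet (S t)) (hSU : ∀ t, S t ⊆ U)
    (hh : IntegrableOn h U ν) :
    BoundedVariationOn (fun t => ∫ x in S t, h x ∂ν) univ := by
  set φ := fun t => ∫ x in S t, |h x| ∂ν
  have hφ : Monotone φ := fun s t hst =>
    setIntegral_mono_set (hh.mono_set (hSU t)).abs (ae_of_all _ fun _ => abs_nonneg _)
      (hS hst).eventuallyLE
  have hφU : ∀ t, |φ t| ≤ ∫ x in U, |h x| ∂ν := fun t => by
    rw [abs_of_nonneg (integral_nonneg fun _ => abs_nonneg _)]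
    exact setIntegral_mono_set hh.abs (ae_of_all _ fun _ => abs_nonneg _) (hSU t).eventuallyLE
  refine ne_top_of_le_ne_top ((hφ.monotoneOn univ).boundedVariationOn fun t _ => hφU t)
    (eVariationOn_le_of_edist_le fun s _ t _ hst => ?_)
  have hsdiff : ∀ g : β → ℝ, IntegrableOn g U ν →
      ∫ x in S t \ S s, g x ∂ν = ∫ x in S t, g x ∂ν - ∫ x in S s, g x ∂ν := fun g hg =>
    setIntegral_sdiff (hSm s) (hg.mono_set (hSU t)) (hS hst)
  rw [edist_dist, edist_dist, dist_comm, Real.dist_eq, dist_comm (φ s), Real.dist_eq,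
    ← hsdiff h hh, ← hsdiff _ hh.abs, abs_of_nonneg (integral_nonneg fun _ => abs_nonneg _)]
  exact ENNReal.ofReal_le_ofReal abs_integral_le_integral_abs

namespace SingleJump

theorem enorm_le_totalVar (f : ℝ≥0 → ℝ) (t : ℝ≥0) : ‖f t‖ₑ ≤ totalVar f := by
  rw [totalVar, ← enorm_eq_nnnorm]
  grw [show f t = f 0 + (f t - f 0) by abel, enorm_add_le, ← edist_eq_enorm_sub,
    eVariationOn.edist_le f (mem_univ t) (mem_univ 0)]

theorem totalVar_ite_lt_le (f : ℝ≥0 → ℝ) (c : ℝ≥0) (x : ℝ) :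
    totalVar (fun t => if t < c then f t else x) ≤ 2 * (totalVar f + ‖x‖ₑ) := by
  have hx : ∀ t, edist x (f t) ≤ ‖x‖ₑ + totalVar f := fun t => by
    rw [edist_eq_enorm_sub]
    grw [enorm_sub_le, enorm_le_totalVar f t]
  have h0 : ‖(if (0 : ℝ≥0) < c then f 0 else x)‖ₑ ≤ ‖f 0‖ₑ + ‖x‖ₑ := by
    split_ifs
    exacts [le_self_add, le_add_self]
  calc totalVar (fun t => if t < c then f t else x)
      ≤ (‖f 0‖ₑ + ‖x‖ₑ) + (eVariationOn f univ + (‖x‖ₑ + totalVar f)) := by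
        rw [totalVar, ← enorm_eq_nnnorm]
        exact add_le_add h0 (eVariationOn_ite_lt_le f c x hx)
    _ = 2 * (totalVar f + ‖x‖ₑ) := by
        rw [totalVar, ← enorm_eq_nnnorm]
        ring

variable {Ω : Type*}

section WithMeasurableSpace

variable [m : MeasurableSpace Ω] {μ : Measure Ω} {γ : Ω → ℝ≥0∞}

theorem Gbar_antitone [IsFiniteMeasure μ] : Antitone (Gbar μ γ) := fun _ _ hst =>
  ENNReal.toReal_mono (measure_ne_top _ _)
    (measure_mono fun _ hω => (ENNReal.coe_le_coe.2 hst).trans_lt hω)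

theorem toReal_measure_eq_top_le_Gbar [IsFiniteMeasure μ] (t : ℝ≥0) :
    (μ {ω | γ ω = ⊤}).toReal ≤ Gbar μ γ t :=
  ENNReal.toReal_mono (measure_ne_top _ _)
    (measure_mono fun ω (hω : γ ω = ⊤) => by simp [hω])

theorem tG_eq_top [IsProbabilityMeasure μ] (hγ : Measurable γ) (hinf : 0 < μ {ω | γ ω = ⊤}) :
    tG μ γ = ⊤ := by
  have hlt : ∀ t : ℝ≥0, μ {ω | γ ω ≤ (t : ℝ≥0∞)} < 1 := fun t =>
    calc μ {ω | γ ω ≤ (t : ℝ≥0∞)} ≤ μ {ω | γ ω = ⊤}ᶜ :=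
          measure_mono fun ω hω (h : γ ω = ⊤) => by simp [h] at hω
      _ = 1 - μ {ω | γ ω = ⊤} := prob_compl_eq_one_sub (hγ (measurableSet_singleton ⊤))
      _ < 1 := ENNReal.sub_lt_self ENNReal.one_ne_top one_ne_zero hinf.ne'
  have huniv : {t : ℝ≥0 | μ {ω | γ ω ≤ (t : ℝ≥0∞)} < 1} = univ := eq_univ_of_forall hlt
  rw [tG, huniv, image_univ, sSup_range, ENNReal.iSup_coe_eq_top, range_id']
  exact not_bddAbove_univ

theorem boundedVariationOn_of_condM [IsProbabilityMeasure μ] {F H : ℝ≥0 → ℝ}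
    (hγ : Measurable γ) (hFH : CondM μ γ F H) (hinf : 0 < μ {ω | γ ω = ⊤})
    (hH : IntegrableOn (fun x : ℝ≥0∞ => H x.toNNReal) (Iio ⊤) (μ.map γ)) :
    BoundedVariationOn F univ := by
  obtain ⟨-, -, hM, -⟩ := hFH
  set p := (μ {ω | γ ω = ⊤}).toReal
  have hp : 0 < p := ENNReal.toReal_pos hinf.ne' (measure_ne_top _ _)
  have hG : ∀ t, 0 < Gbar μ γ t := fun t => hp.trans_le (toReal_measure_eq_top_le_Gbar t)
  set I := fun t : ℝ≥0 => ∫ x in Ioc 0 (t : ℝ≥0∞), H x.toNNReal ∂(μ.map γ)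
  have hF : F = fun t => (F 0 * Gbar μ γ 0 - I t) * (Gbar μ γ t)⁻¹ := by
    funext t
    have := hM t (by simp [tG_eq_top hγ hinf])
    field_simp [(hG t).ne']
    linarith
  have hI : BoundedVariationOn I univ :=
    boundedVariationOn_setIntegral_of_monotone
      (fun s t hst => Ioc_subset_Ioc_right (ENNReal.coe_le_coe.2 hst))
      (fun _ => measurableSet_Ioc) (fun _ _ hx => hx.2.trans_lt ENNReal.coe_lt_top) hH
  have hGinv : BoundedVariationOn (fun t => (Gbar μ γ t)⁻¹) univ := by
    refine MonotoneOn.boundedVariationOn (C := p⁻¹)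
      (fun s _ t _ hst => inv_anti₀ (hG t) (Gbar_antitone hst)) fun t _ => ?_
    rw [abs_of_pos (inv_pos.2 (hG t))]
    exact inv_anti₀ hp (toReal_measure_eq_top_le_Gbar t)
  rw [hF]
  exact (hI.const_sub _).fun_mul hGinv

theorem integrable_indicator_jump {H : ℝ≥0 → ℝ} {L' : Ω → ℝ} (hγ : Measurable γ)
    (hH : IntegrableOn (fun x : ℝ≥0∞ => H x.toNNReal) (Iio ⊤) (μ.map γ))
    (hL' : Integrable ({ω | γ ω < ⊤}.indicator L') μ) :
    Integrable ({ω | γ ω < ⊤}.indicator fun ω => H (γ ω).toNNReal + L' ω) μ := by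
  have hHγ : Integrable ({ω | γ ω < ⊤}.indicator fun ω => H (γ ω).toNNReal) μ := by
    refine (integrable_indicator_iff (s := γ ⁻¹' Iio ⊤) (hγ measurableSet_Iio)).2 ?_
    rw [IntegrableOn, Measure.restrict_map hγ measurableSet_Iio] at hH
    exact (integrable_map_measure hH.1 hγ.aemeasurable).1 hH
  rw [indicator_add]
  exact hHγ.add hL'

theorem stmt_13_general
(μ : Measure Ω) [IsProbabilityMeasure μ] (γ : Ω → ℝ≥0∞)
    (hγ : Measurable γ)
    (M : ℝ≥0 → Ω → ℝ) (F H : ℝ≥0 → ℝ) (L' : Ω → ℝ)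
    (hFH : CondM μ γ F H)
    (hrepr : ∀ᵐ ω ∂μ, ∀ t : ℝ≥0,
      M t ω = if (t : ℝ≥0∞) < γ ω then F t else H (γ ω).toNNReal + L' ω)
    (hinf : 0 < μ {ω | γ ω = ⊤})
    (hL'fin : Integrable (fun ω => ({ω' | γ ω' < ⊤}.indicator L') ω) μ)
    (hHfin : IntegrableOn (fun x : ℝ≥0∞ => H x.toNNReal) (Iio (⊤ : ℝ≥0∞)) (μ.map γ)) :
    ∫⁻ ω, totalVar (fun t => M t ω) ∂μ < ⊤ := by
  set J := {ω | γ ω < ⊤}.indicator fun ω => H (γ ω).toNNReal + L' ω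
  have hF : totalVar F < ⊤ := ENNReal.add_lt_top.2
    ⟨ENNReal.coe_lt_top, (boundedVariationOn_of_condM hγ hFH hinf hHfin).lt_top⟩
  have hJ : Integrable J μ := integrable_indicator_jump hγ hHfin hL'fin
  have hpath : ∀ᵐ ω ∂μ, totalVar (fun t => M t ω) ≤ 2 * (totalVar F + ‖J ω‖ₑ) := by
    filter_upwards [hrepr] with ω hω
    rw [funext hω]
    rcases eq_top_or_lt_top (γ ω) with hγω | hγω
    · simp [J, hγω, two_mul]
    · obtain ⟨c, hc⟩ := WithTop.ne_top_iff_exists.1 hγω.ne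
      simpa [J, ← hc, hγω] using totalVar_ite_lt_le F c (H c + L' ω)
  calc ∫⁻ ω, totalVar (fun t => M t ω) ∂μ ≤ ∫⁻ ω, 2 * (totalVar F + ‖J ω‖ₑ) ∂μ :=
        lintegral_mono_ae hpath
    _ = 2 * (totalVar F + ∫⁻ ω, ‖J ω‖ₑ ∂μ) := by
        rw [lintegral_const_mul' _ _ (by simp), lintegral_add_left measurable_const,
          lintegral_const, measure_univ, mul_one]
    _ < ⊤ := ENNReal.mul_lt_top (by simp) (ENNReal.add_lt_top.2 ⟨hF, hJ.2⟩)

/-- **Theorem 5 (ii), Case A.** If `P(γ = ∞) > 0`, `E(|L'|·1_{γ<∞}) < ∞` and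
`∫_{ℝ₊} |H| dG < ∞`, then `M` has integrable total variation. -/
theorem stmt_13
(μ : Measure Ω) [IsProbabilityMeasure μ] (γ : Ω → ℝ≥0∞)
    (hγ : Measurable γ) (hpos : 0 < μ {ω | 0 < γ ω})
    (M : ℝ≥0 → Ω → ℝ) (F H : ℝ≥0 → ℝ) (L' : Ω → ℝ)
    (hM : LocalMartingale μ γ M)
    (hFH : CondM μ γ F H)
    (hL'meas : Measurable L')
    (hL'int : ∀ t ∈ TT μ γ,
      Integrable (fun ω => ({ω' | γ ω' ≤ (t : ℝ≥0∞)}.indicator L') ω) μ)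
    (hL'cond : CondZeroGivenGamma μ γ L')
    (hrepr : ∀ᵐ ω ∂μ, ∀ t : ℝ≥0,
      M t ω = if (t : ℝ≥0∞) < γ ω then F t else H (γ ω).toNNReal + L' ω)
    (hA : CaseA μ γ)
    (hinf : 0 < μ {ω | γ ω = ⊤})
    (hL'fin : Integrable (fun ω => ({ω' | γ ω' < ⊤}.indicator L') ω) μ)
    (hHfin : IntegrableOn (fun x : ℝ≥0∞ => H x.toNNReal) (Iio (⊤ : ℝ≥0∞)) (μ.map γ)) :
    ∫⁻ ω, totalVar (fun t => M t ω) ∂μ < ⊤ :=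
  stmt_13_general μ γ hγ M F H L' hFH hrepr hinf hL'fin hHfin

end WithMeasurableSpace

end SingleJump
end
end

section
/- In Case A, assume P(γ = ∞) = 0, E|L′| < ∞, and ∫_{[0,t_G)} |H(s)| dG(s) < ∞. Then M is a closed supermartingale with E(M_∞) < E(M_0) if and only if lim_{t↑t_G} F(t)Ḡ(t) > 0, and M is a closed submartingale with E(M_∞) > E(M_0) if and only if lim_{t↑t_G} F(t)Ḡ(t) < 0. -/
/-!
In Case A with `γ < ∞` a.s. we have `γ < t_G` a.s., and `M_t = Z := H(γ) + L'` once `t ≥ γ`,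
so `M_∞ = Z`. Condition M and `E[L' | γ] = 0` give `∫_{γ > t} Z = F(t)Ḡ(t) - c` for `t < t_G`,
with `c = F(0)Ḡ(0) - ∫_{(0,∞]} H dG`. The left side vanishes as `t ↑ t_G`, so
`c = lim F(t)Ḡ(t)`, and at `t = 0` the identity reads `E M_0 = c + E M_∞`. As `{γ > t}` is the
only atom of `𝒻_t`, `E[Z | 𝒻_t]` is `Z = M_t` off it and `F(t) - c / Ḡ(t)` on it: `Z` closes
`M` as a supermartingale when `c ≥ 0` and as a submartingale when `c ≤ 0`, and any closing
variable is the a.s. limit `Z`, so the strict inequality between expectations is exactly the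
sign of `c`.
-/

open MeasureTheory Filter Set Topology
open scoped ENNReal NNReal Classical

noncomputable section

namespace SingleJump

variable {Ω : Type*}

section WithMeasurableSpace

variable [m : MeasurableSpace Ω]

section SigmaAlgebra

variable {μ : Measure Ω} {γ : Ω → ℝ≥0∞} {t : ℝ≥0}

lemma measurableSet_jumpSet (hγ : Measurable γ) (t : ℝ≥0) : MeasurableSet (jumpSet γ t) :=
  hγ measurableSet_Ioi

lemma compl_inter_eq_self_iff {α : Type*} {A J : Set α} : Aᶜ ∩ J = J ↔ A ∩ J = ∅ := by
  rw [inter_eq_right, subset_compl_iff_disjoint_left, disjoint_iff_inter_eq_empty]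

def jumpMeasurableSpace (γ : Ω → ℝ≥0∞) (t : ℝ≥0) : MeasurableSpace Ω where
  MeasurableSet' := (· ∈ jumpColl m γ t)
  measurableSet_empty := ⟨.empty, .inl (empty_inter _)⟩
  measurableSet_compl A := by
    rintro ⟨hA, h | h⟩
    · exact ⟨hA.compl, .inr (compl_inter_eq_self_iff.2 h)⟩
    · exact ⟨hA.compl, .inl (compl_inter_eq_self_iff.1 (by rwa [compl_compl]))⟩
  measurableSet_iUnion f hf := by
    refine ⟨.iUnion fun i => (hf i).1, ?_⟩
    by_cases h : ∃ i, f i ∩ jumpSet γ t = jumpSet γ t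
    · obtain ⟨i, hi⟩ := h
      exact .inr (inter_eq_right.2 ((inter_eq_right.1 hi).trans (subset_iUnion f i)))
    · push Not at h
      exact .inl (by simpa [iUnion_inter] using fun i => ((hf i).2.resolve_right (h i)))

lemma measurableSet_jumpσ_iff {A : Set Ω} :
    MeasurableSet[jumpσ m γ t] A ↔ A ∈ jumpColl m γ t :=
  ⟨fun h => MeasurableSpace.generateFrom_le (m := jumpMeasurableSpace γ t) (fun _ hs => hs) _ h,
    MeasurableSpace.measurableSet_generateFrom⟩

lemma jumpσ_le : jumpσ m γ t ≤ m :=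
  MeasurableSpace.generateFrom_le fun _ hs => hs.1

lemma Gbar_eq_measureReal : Gbar μ γ t = μ.real (jumpSet γ t) := rfl

lemma piecewise_jumpSet_apply {α : Type*} {g : α → ℝ≥0∞} (a : ℝ) (Z : α → ℝ) (x : α) :
    (jumpSet g t).piecewise (fun _ => a) Z x = if (t : ℝ≥0∞) < g x then a else Z x := by
  by_cases h : (t : ℝ≥0∞) < g x
  · rw [piecewise_eq_of_mem (jumpSet g t) _ _ h, if_pos h]
  · rw [piecewise_eq_of_notMem (jumpSet g t) _ _ h, if_neg h]

lemma measurable_jumpσ_piecewise (hγ : Measurable γ) {Z : Ω → ℝ} (hZm : Measurable Z) (a : ℝ) :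
    Measurable[jumpσ m γ t] ((jumpSet γ t).piecewise (fun _ => a) Z) := by
  intro B hB
  refine measurableSet_jumpσ_iff.2
    ⟨measurable_const.piecewise (measurableSet_jumpSet hγ t) hZm hB, ?_⟩
  by_cases ha : a ∈ B
  · exact .inr (inter_eq_right.2 fun ω hω => by simp [hω, ha])
  · refine .inl (eq_empty_of_forall_notMem fun ω ⟨hωB, hωJ⟩ => ha ?_)
    rwa [mem_preimage, piecewise_eq_of_mem (jumpSet γ t) _ Z hωJ] at hωB

/-- `{γ > t}` is the only atom of `𝒻_t`: there the conditional expectation averages `Z`, and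
off it `Z` is already `𝒻_t`-measurable. -/
lemma condExp_jumpσ_ae_eq [IsFiniteMeasure μ] (hγ : Measurable γ) {Z : Ω → ℝ}
    (hZm : Measurable Z) (hZi : Integrable Z μ) :
    μ[Z|jumpσ m γ t] =ᵐ[μ]
      (jumpSet γ t).piecewise (fun _ => ⨍ ω in jumpSet γ t, Z ω ∂μ) Z := by
  set J := jumpSet γ t
  have hJ : MeasurableSet J := measurableSet_jumpSet hγ t
  set g := J.piecewise (fun _ => ⨍ ω in J, Z ω ∂μ) Z
  have hgi : Integrable g μ :=
    Integrable.piecewise hJ (integrable_const _).integrableOn hZi.integrableOn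
  refine (ae_eq_condExp_of_forall_setIntegral_eq jumpσ_le hZi (fun _ _ _ => hgi.integrableOn)
    (fun s hs _ => ?_) (measurable_jumpσ_piecewise hγ hZm _).aestronglyMeasurable).symm
  obtain ⟨hsm, hsJ | hsJ⟩ := measurableSet_jumpσ_iff.1 hs
  all_goals
    rw [← integral_inter_add_sdiff hJ hgi.integrableOn,
      ← integral_inter_add_sdiff hJ hZi.integrableOn,
      setIntegral_congr_fun (hsm.diff hJ) fun ω hω => piecewise_eq_of_notMem J _ Z hω.2]
  · rw [hsJ, Measure.restrict_empty, integral_zero_measure, integral_zero_measure]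
  · rw [hsJ, setIntegral_congr_fun hJ fun ω hω => piecewise_eq_of_mem J _ Z hω,
      setIntegral_const, measure_smul_setAverage _ (measure_ne_top μ J)]

end SigmaAlgebra

section Endpoint

variable {μ : Measure Ω} [IsProbabilityMeasure μ] {γ : Ω → ℝ≥0∞} {t : ℝ≥0}

lemma measure_jumpSet_pos_iff (hγ : Measurable γ) :
    0 < μ (jumpSet γ t) ↔ μ {ω | γ ω ≤ t} < 1 := by
  have : jumpSet γ t = (γ ⁻¹' Iic t)ᶜ := by ext; simp [jumpSet]
  rw [this, prob_compl_eq_one_sub (hγ measurableSet_Iic)]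
  exact tsub_pos_iff_lt

lemma measure_jumpSet_eq_zero_of_tG_lt (hγ : Measurable γ) (h : tG μ γ < t) :
    μ (jumpSet γ t) = 0 := by
  by_contra h0
  exact h.not_ge (le_sSup ⟨t, (measure_jumpSet_pos_iff hγ).1 (pos_iff_ne_zero.2 h0), rfl⟩)

lemma measure_jumpSet_pos_of_lt_tG (hγ : Measurable γ) (h : t < tG μ γ) :
    0 < μ (jumpSet γ t) := by
  obtain ⟨_, ⟨t', ht', rfl⟩, htt'⟩ := lt_sSup_iff.1 h
  exact ((measure_jumpSet_pos_iff hγ).2 ht').trans_le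
    (measure_mono fun ω (hω : (t' : ℝ≥0∞) < γ ω) => htt'.trans hω)

lemma ae_lt_tG (hγ : Measurable γ) (hA : CaseA μ γ) (hfin : μ {ω | γ ω = ⊤} = 0) :
    ∀ᵐ ω ∂μ, γ ω < tG μ γ := by
  have hcover : {ω | ¬ γ ω < tG μ γ} ⊆ {ω | γ ω = tG μ γ ∧ tG μ γ < ⊤} ∪ {ω | γ ω = ⊤} ∪
      ⋃ (q : ℚ) (_ : tG μ γ < Real.toNNReal q), jumpSet γ (Real.toNNReal q) := by
    intro ω hω
    rcases (not_lt.1 hω).eq_or_lt with h | h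
    · rcases eq_or_lt_of_le (le_top : tG μ γ ≤ ⊤) with htop | htop
      · exact .inl (.inr (h.symm.trans htop : γ ω = ⊤))
      · exact .inl (.inl ⟨h.symm, htop⟩)
    · obtain ⟨q, -, hq, hqγ⟩ := ENNReal.lt_iff_exists_rat_btwn.1 h
      exact .inr (mem_iUnion₂.2 ⟨q, hq, hqγ⟩)
  exact ae_iff.2 <| measure_mono_null hcover <| measure_union_null (measure_union_null hA hfin)
    (measure_iUnion_null fun _ => measure_iUnion_null (measure_jumpSet_eq_zero_of_tG_lt hγ))

lemma tG_pos_of_ae_lt (hlt : ∀ᵐ ω ∂μ, γ ω < tG μ γ) : 0 < tG μ γ :=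
  let ⟨_, h⟩ := hlt.exists
  zero_le.trans_lt h

end Endpoint

section LeftLimit

instance (a : ℝ≥0∞) : (leftF a).IsCountablyGenerated :=
  comap.isCountablyGenerated _ _

lemma eventually_lt_leftF (a : ℝ≥0∞) : ∀ᶠ t : ℝ≥0 in leftF a, (t : ℝ≥0∞) < a :=
  preimage_mem_comap self_mem_nhdsWithin

lemma eventually_gt_leftF {a s : ℝ≥0∞} (hs : s < a) : ∀ᶠ t : ℝ≥0 in leftF a, s < t :=
  preimage_mem_comap (mem_nhdsWithin_of_mem_nhds (isOpen_Ioi.mem_nhds hs))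

lemma leftF_neBot {a : ℝ≥0∞} (ha : 0 < a) : (leftF a).NeBot := by
  refine NeBot.comap_of_range_mem (nhdsLT_neBot_of_exists_lt ⟨0, ha⟩) ?_
  rw [ENNReal.range_coe']
  exact mem_of_superset self_mem_nhdsWithin (Iio_subset_Iio le_top)

lemma tendsto_setIntegral_jumpSet_leftF {μ : Measure Ω} {γ : Ω → ℝ≥0∞} {a : ℝ≥0∞}
    (hγ : Measurable γ) {Z : Ω → ℝ} (hZi : Integrable Z μ) (hlt : ∀ᵐ ω ∂μ, γ ω < a) :
    Tendsto (fun t : ℝ≥0 => ∫ ω in jumpSet γ t, Z ω ∂μ) (leftF a) (𝓝 0) := by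
  simp_rw [← integral_indicator (measurableSet_jumpSet hγ _)]
  rw [← integral_zero (μ := μ) (G := ℝ)]
  refine tendsto_integral_filter_of_dominated_convergence (‖Z ·‖)
    (.of_forall fun t => hZi.1.indicator (measurableSet_jumpSet hγ t))
    (.of_forall fun _ => .of_forall fun _ => norm_indicator_le_norm_self _ _) hZi.norm ?_
  filter_upwards [hlt] with ω hω
  refine tendsto_const_nhds.congr' ?_
  filter_upwards [eventually_gt_leftF hω] with t ht
  exact (indicator_of_notMem (s := jumpSet γ t) (fun h => lt_asymm h ht) Z).symm

end LeftLimit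

section ClosedLimit

variable {μ : Measure Ω} {𝓕 : ℝ≥0 → MeasurableSpace Ω} {M : ℝ≥0 → Ω → ℝ} {Z : Ω → ℝ}
  {f : ℝ≥0 → ℝ} {l : Filter ℝ≥0} [l.NeBot] {c : ℝ}

lemma integral_eq_of_ae_tendsto {Z' : Ω → ℝ}
    (hZ : ∀ᵐ ω ∂μ, Tendsto (fun t => M t ω) atTop (𝓝 (Z ω)))
    (hZ' : ∀ᵐ ω ∂μ, Tendsto (fun t => M t ω) atTop (𝓝 (Z' ω))) :
    ∫ ω, Z' ω ∂μ = ∫ ω, Z ω ∂μ :=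
  integral_congr_ae ((hZ'.and hZ).mono fun _ h => tendsto_nhds_unique h.1 h.2)

lemma closedSuper_strict_iff_pos (hMZ : ∀ᵐ ω ∂μ, Tendsto (fun t => M t ω) atTop (𝓝 (Z ω)))
    (hZi : Integrable Z μ) (hE : ∫ ω, M 0 ω ∂μ = c + ∫ ω, Z ω ∂μ) (hf : Tendsto f l (𝓝 c))
    (hcond : 0 ≤ c → ∀ t, μ[Z|𝓕 t] ≤ᵐ[μ] M t) :
    (∃ Z' : Ω → ℝ, (∀ᵐ ω ∂μ, Tendsto (fun t => M t ω) atTop (𝓝 (Z' ω))) ∧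
        Integrable Z' μ ∧ (∀ t, μ[Z'|𝓕 t] ≤ᵐ[μ] M t) ∧ ∫ ω, Z' ω ∂μ < ∫ ω, M 0 ω ∂μ) ↔
      ∃ c', 0 < c' ∧ Tendsto f l (𝓝 c') := by
  constructor
  · rintro ⟨Z', hMZ', -, -, hlt⟩
    rw [integral_eq_of_ae_tendsto hMZ hMZ'] at hlt
    exact ⟨c, by linarith, hf⟩
  · rintro ⟨c', hc', hf'⟩
    obtain rfl := tendsto_nhds_unique hf hf'
    exact ⟨Z, hMZ, hZi, hcond hc'.le, by linarith⟩

lemma closedSub_strict_iff_neg (hMZ : ∀ᵐ ω ∂μ, Tendsto (fun t => M t ω) atTop (𝓝 (Z ω)))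
    (hZi : Integrable Z μ) (hE : ∫ ω, M 0 ω ∂μ = c + ∫ ω, Z ω ∂μ) (hf : Tendsto f l (𝓝 c))
    (hcond : c ≤ 0 → ∀ t, M t ≤ᵐ[μ] μ[Z|𝓕 t]) :
    (∃ Z' : Ω → ℝ, (∀ᵐ ω ∂μ, Tendsto (fun t => M t ω) atTop (𝓝 (Z' ω))) ∧
        Integrable Z' μ ∧ (∀ t, M t ≤ᵐ[μ] μ[Z'|𝓕 t]) ∧ ∫ ω, M 0 ω ∂μ < ∫ ω, Z' ω ∂μ) ↔
      ∃ c', c' < 0 ∧ Tendsto f l (𝓝 c') := by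
  constructor
  · rintro ⟨Z', hMZ', -, -, hlt⟩
    rw [integral_eq_of_ae_tendsto hMZ hMZ'] at hlt
    exact ⟨c, by linarith, hf⟩
  · rintro ⟨c', hc', hf'⟩
    obtain rfl := tendsto_nhds_unique hf hf'
    exact ⟨Z, hMZ, hZi, hcond hc'.le, by linarith⟩

end ClosedLimit

section SingleJumpProcess

variable {μ : Measure Ω} {γ : Ω → ℝ≥0∞} {M : ℝ≥0 → Ω → ℝ} {F : ℝ≥0 → ℝ} {Z : Ω → ℝ} {c : ℝ}

lemma ae_tendsto_atTop_of_ite (hfin : ∀ᵐ ω ∂μ, γ ω ≠ ⊤)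
    (hrepr : ∀ᵐ ω ∂μ, ∀ t : ℝ≥0, M t ω = if (t : ℝ≥0∞) < γ ω then F t else Z ω) :
    ∀ᵐ ω ∂μ, Tendsto (fun t => M t ω) atTop (𝓝 (Z ω)) := by
  filter_upwards [hrepr, hfin] with ω hω hγω
  refine tendsto_const_nhds.congr' ?_
  filter_upwards [eventually_ge_atTop (γ ω).toNNReal] with t ht
  rw [hω t, if_neg (not_lt.2 ?_)]
  rw [← ENNReal.coe_toNNReal hγω]
  exact_mod_cast ht

lemma integral_initial_eq_add [IsFiniteMeasure μ] (hγ : Measurable γ) (hZi : Integrable Z μ)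
    (hrepr : ∀ᵐ ω ∂μ, ∀ t : ℝ≥0, M t ω = if (t : ℝ≥0∞) < γ ω then F t else Z ω)
    (hZJ : ∫ ω in jumpSet γ 0, Z ω ∂μ = F 0 * Gbar μ γ 0 - c) :
    ∫ ω, M 0 ω ∂μ = c + ∫ ω, Z ω ∂μ := by
  have hJ := measurableSet_jumpSet hγ 0
  have hM0 : M 0 =ᵐ[μ] (jumpSet γ 0).piecewise (fun _ => F 0) Z := by
    filter_upwards [hrepr] with ω hω
    rw [hω 0, piecewise_jumpSet_apply]
  rw [integral_congr_ae hM0, integral_piecewise hJ (integrable_const _).integrableOn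
    hZi.integrableOn, setIntegral_const, ← integral_add_compl hJ hZi, hZJ, smul_eq_mul,
    Gbar_eq_measureReal]
  ring

lemma tendsto_mul_Gbar_leftF (hγ : Measurable γ) (hlt : ∀ᵐ ω ∂μ, γ ω < tG μ γ)
    (hZi : Integrable Z μ)
    (hZJ : ∀ t : ℝ≥0, (t : ℝ≥0∞) < tG μ γ →
      ∫ ω in jumpSet γ t, Z ω ∂μ = F t * Gbar μ γ t - c) :
    Tendsto (fun t => F t * Gbar μ γ t) (leftF (tG μ γ)) (𝓝 c) := by
  have h := (tendsto_setIntegral_jumpSet_leftF hγ hZi hlt).const_add c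
  rw [add_zero] at h
  refine h.congr' ?_
  filter_upwards [eventually_lt_leftF (tG μ γ)] with t ht
  rw [hZJ t ht]
  ring

variable [IsProbabilityMeasure μ]

lemma condExp_jumpσ_ae_eq_ite (hγ : Measurable γ) (hlt : ∀ᵐ ω ∂μ, γ ω < tG μ γ)
    (hZm : Measurable Z) (hZi : Integrable Z μ)
    (hZJ : ∀ t : ℝ≥0, (t : ℝ≥0∞) < tG μ γ →
      ∫ ω in jumpSet γ t, Z ω ∂μ = F t * Gbar μ γ t - c) (t : ℝ≥0) :
    μ[Z|jumpσ m γ t] =ᵐ[μ] fun ω => if (t : ℝ≥0∞) < γ ω then F t - c / Gbar μ γ t else Z ω := by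
  filter_upwards [condExp_jumpσ_ae_eq (t := t) hγ hZm hZi, hlt] with ω h hω
  rw [h, piecewise_jumpSet_apply]
  split_ifs with hJ
  · have htG := hJ.trans hω
    have hG : Gbar μ γ t ≠ 0 :=
      (ENNReal.toReal_pos (measure_jumpSet_pos_of_lt_tG hγ htG).ne' (measure_ne_top _ _)).ne'
    rw [setAverage_eq, hZJ t htG, ← Gbar_eq_measureReal, smul_eq_mul]
    field_simp
  · rfl

lemma condExp_jumpσ_le_of_nonneg (hγ : Measurable γ) (hlt : ∀ᵐ ω ∂μ, γ ω < tG μ γ)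
    (hZm : Measurable Z) (hZi : Integrable Z μ)
    (hZJ : ∀ t : ℝ≥0, (t : ℝ≥0∞) < tG μ γ →
      ∫ ω in jumpSet γ t, Z ω ∂μ = F t * Gbar μ γ t - c)
    (hrepr : ∀ᵐ ω ∂μ, ∀ t : ℝ≥0, M t ω = if (t : ℝ≥0∞) < γ ω then F t else Z ω)
    (hc : 0 ≤ c) (t : ℝ≥0) : μ[Z|jumpσ m γ t] ≤ᵐ[μ] M t := by
  filter_upwards [condExp_jumpσ_ae_eq_ite hγ hlt hZm hZi hZJ t, hrepr] with ω h hM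
  rw [h, hM t]
  split_ifs
  · exact sub_le_self _ (div_nonneg hc ENNReal.toReal_nonneg)
  · rfl

lemma le_condExp_jumpσ_of_nonpos (hγ : Measurable γ) (hlt : ∀ᵐ ω ∂μ, γ ω < tG μ γ)
    (hZm : Measurable Z) (hZi : Integrable Z μ)
    (hZJ : ∀ t : ℝ≥0, (t : ℝ≥0∞) < tG μ γ →
      ∫ ω in jumpSet γ t, Z ω ∂μ = F t * Gbar μ γ t - c)
    (hrepr : ∀ᵐ ω ∂μ, ∀ t : ℝ≥0, M t ω = if (t : ℝ≥0∞) < γ ω then F t else Z ω)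
    (hc : c ≤ 0) (t : ℝ≥0) : M t ≤ᵐ[μ] μ[Z|jumpσ m γ t] := by
  filter_upwards [condExp_jumpσ_ae_eq_ite hγ hlt hZm hZi hZJ t, hrepr] with ω h hM
  rw [h, hM t]
  split_ifs
  · exact (le_sub_self_iff _).2 (div_nonpos_of_nonpos_of_nonneg hc ENNReal.toReal_nonneg)
  · rfl

end SingleJumpProcess

section ConditionM

variable {μ : Measure Ω} {γ : Ω → ℝ≥0∞} {L' : Ω → ℝ}

lemma setIntegral_preimage_add_of_condZero (hγ : Measurable γ) {h : ℝ≥0∞ → ℝ}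
    (hh : Integrable h (μ.map γ)) (hL' : Integrable L' μ)
    (hL'c : CondZeroGivenGamma μ γ L') {B : Set ℝ≥0∞} (hB : MeasurableSet B) :
    ∫ ω in γ ⁻¹' B, (h (γ ω) + L' ω) ∂μ = ∫ x in B, h x ∂μ.map γ := by
  have hhγ : Integrable (fun ω => h (γ ω)) μ := (integrable_map_measure hh.1 hγ.aemeasurable).1 hh
  rw [integral_add hhγ.integrableOn hL'.integrableOn, hL'c B hB hL'.integrableOn, add_zero,
    setIntegral_map hB hh.1 hγ.aemeasurable]

lemma setIntegral_jumpSet_eq_of_condM (hγ : Measurable γ) {F H : ℝ≥0 → ℝ}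
    (hH : Integrable (fun x : ℝ≥0∞ => H x.toNNReal) (μ.map γ)) (hL' : Integrable L' μ)
    (hL'c : CondZeroGivenGamma μ γ L')
    (hFH : ∀ t : ℝ≥0, (t : ℝ≥0∞) < tG μ γ →
      F t * Gbar μ γ t + ∫ x in Ioc (0 : ℝ≥0∞) (t : ℝ≥0∞), H x.toNNReal ∂(μ.map γ)
        = F 0 * Gbar μ γ 0)
    (t : ℝ≥0) (ht : (t : ℝ≥0∞) < tG μ γ) :
    ∫ ω in jumpSet γ t, (H (γ ω).toNNReal + L' ω) ∂μ
      = F t * Gbar μ γ t - (F 0 * Gbar μ γ 0 - ∫ x in Ioi 0, H x.toNNReal ∂(μ.map γ)) := by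
  have hsplit := setIntegral_union (Ioc_disjoint_Ioi le_rfl) measurableSet_Ioi
    hH.integrableOn hH.integrableOn (s := Ioc 0 (t : ℝ≥0∞))
  rw [Ioc_union_Ioi_eq_Ioi zero_le] at hsplit
  have hJ := setIntegral_preimage_add_of_condZero hγ hH hL' hL'c
    (measurableSet_Ioi (a := (t : ℝ≥0∞)))
  beta_reduce at hJ
  rw [show jumpSet γ t = γ ⁻¹' Ioi (t : ℝ≥0∞) from rfl, hJ]
  linarith [hFH t ht]

end ConditionM

theorem stmt_14_general
(μ : Measure Ω) [IsProbabilityMeasure μ] (γ : Ω → ℝ≥0∞)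
    (hγ : Measurable γ)
    (M : ℝ≥0 → Ω → ℝ) (F H : ℝ≥0 → ℝ) (L' : Ω → ℝ)
    (hFH : CondM μ γ F H)
    (hL'meas : Measurable L')
    (hL'cond : CondZeroGivenGamma μ γ L')
    (hrepr : ∀ᵐ ω ∂μ, ∀ t : ℝ≥0,
      M t ω = if (t : ℝ≥0∞) < γ ω then F t else H (γ ω).toNNReal + L' ω)
    (hA : CaseA μ γ)
    (hfin : μ {ω | γ ω = ⊤} = 0)
    (hL'fin : Integrable L' μ)
    (hHfin : IntegrableOn (fun x : ℝ≥0∞ => H x.toNNReal) (Iio (tG μ γ)) (μ.map γ)) :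
    ((∃ Z : Ω → ℝ,
        (∀ᵐ ω ∂μ, Tendsto (fun t => M t ω) atTop (𝓝 (Z ω))) ∧
        Integrable Z μ ∧
        (∀ t : ℝ≥0, μ[Z|jumpσ m γ t] ≤ᵐ[μ] M t) ∧
        ∫ ω, Z ω ∂μ < ∫ ω, M 0 ω ∂μ) ↔
      (∃ c : ℝ, 0 < c ∧
        Tendsto (fun t => F t * Gbar μ γ t) (leftF (tG μ γ)) (𝓝 c))) ∧
    ((∃ Z : Ω → ℝ,
        (∀ᵐ ω ∂μ, Tendsto (fun t => M t ω) atTop (𝓝 (Z ω))) ∧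
        Integrable Z μ ∧
        (∀ t : ℝ≥0, M t ≤ᵐ[μ] μ[Z|jumpσ m γ t]) ∧
        ∫ ω, M 0 ω ∂μ < ∫ ω, Z ω ∂μ) ↔
      (∃ c : ℝ, c < 0 ∧
        Tendsto (fun t => F t * Gbar μ γ t) (leftF (tG μ γ)) (𝓝 c))) := by
  obtain ⟨-, ⟨hHm, -⟩, hFG, -⟩ := hFH
  have hlt := ae_lt_tG hγ hA hfin
  have htG := tG_pos_of_ae_lt hlt
  have hH : Integrable (fun x : ℝ≥0∞ => H x.toNNReal) (μ.map γ) := by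
    rwa [← Measure.restrict_eq_self_of_ae_mem
      ((ae_map_iff hγ.aemeasurable measurableSet_Iio).2 hlt)]
  set Z : Ω → ℝ := fun ω => H (γ ω).toNNReal + L' ω
  have hZm : Measurable Z := (hHm.comp (ENNReal.measurable_toNNReal.comp hγ)).add hL'meas
  have hZi : Integrable Z μ :=
    ((integrable_map_measure hH.1 hγ.aemeasurable).1 hH).add hL'fin
  have hZJ := setIntegral_jumpSet_eq_of_condM hγ hH hL'fin hL'cond hFG
  have hMZ := ae_tendsto_atTop_of_ite (hlt.mono fun _ h => h.ne_top) hrepr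
  have hE := integral_initial_eq_add hγ hZi hrepr (hZJ 0 htG)
  have hlim := tendsto_mul_Gbar_leftF hγ hlt hZi hZJ
  have := leftF_neBot htG
  exact ⟨closedSuper_strict_iff_pos hMZ hZi hE hlim
      (condExp_jumpσ_le_of_nonneg hγ hlt hZm hZi hZJ hrepr),
    closedSub_strict_iff_neg hMZ hZi hE hlim
      (le_condExp_jumpσ_of_nonpos hγ hlt hZm hZi hZJ hrepr)⟩

/-- **Theorem 5 (iii.i), Case A.** Assume `P(γ = ∞) = 0`, `E|L'| < ∞` and
`∫_{[0,t_G)} |H| dG < ∞`. Then `M` is a closed supermartingale with `E(M_∞) < E(M_0)`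
iff `lim_{t↑t_G} F(t)Ḡ(t) > 0`, and a closed submartingale with `E(M_∞) > E(M_0)` iff
`lim_{t↑t_G} F(t)Ḡ(t) < 0`. -/
theorem stmt_14
(μ : Measure Ω) [IsProbabilityMeasure μ] (γ : Ω → ℝ≥0∞)
    (hγ : Measurable γ) (hpos : 0 < μ {ω | 0 < γ ω})
    (M : ℝ≥0 → Ω → ℝ) (F H : ℝ≥0 → ℝ) (L' : Ω → ℝ)
    (hM : LocalMartingale μ γ M)
    (hFH : CondM μ γ F H)
    (hL'meas : Measurable L')
    (hL'int : ∀ t ∈ TT μ γ,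
      Integrable (fun ω => ({ω' | γ ω' ≤ (t : ℝ≥0∞)}.indicator L') ω) μ)
    (hL'cond : CondZeroGivenGamma μ γ L')
    (hrepr : ∀ᵐ ω ∂μ, ∀ t : ℝ≥0,
      M t ω = if (t : ℝ≥0∞) < γ ω then F t else H (γ ω).toNNReal + L' ω)
    (hA : CaseA μ γ)
    (hfin : μ {ω | γ ω = ⊤} = 0)
    (hL'fin : Integrable L' μ)
    (hHfin : IntegrableOn (fun x : ℝ≥0∞ => H x.toNNReal) (Iio (tG μ γ)) (μ.map γ)) :
    ((∃ Z : Ω → ℝ,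
        (∀ᵐ ω ∂μ, Tendsto (fun t => M t ω) atTop (𝓝 (Z ω))) ∧
        Integrable Z μ ∧
        (∀ t : ℝ≥0, μ[Z|jumpσ m γ t] ≤ᵐ[μ] M t) ∧
        ∫ ω, Z ω ∂μ < ∫ ω, M 0 ω ∂μ) ↔
      (∃ c : ℝ, 0 < c ∧
        Tendsto (fun t => F t * Gbar μ γ t) (leftF (tG μ γ)) (𝓝 c))) ∧
    ((∃ Z : Ω → ℝ,
        (∀ᵐ ω ∂μ, Tendsto (fun t => M t ω) atTop (𝓝 (Z ω))) ∧
        Integrable Z μ ∧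
        (∀ t : ℝ≥0, M t ≤ᵐ[μ] μ[Z|jumpσ m γ t]) ∧
        ∫ ω, M 0 ω ∂μ < ∫ ω, Z ω ∂μ) ↔
      (∃ c : ℝ, c < 0 ∧
        Tendsto (fun t => F t * Gbar μ γ t) (leftF (tG μ γ)) (𝓝 c))) :=
  stmt_14_general μ γ hγ M F H L' hFH hL'meas hL'cond hrepr hA hfin hL'fin hHfin

end WithMeasurableSpace

end SingleJump
end
end
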